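/- arXiv:quant-ph/0305182 — 3 statements merged into one kernel-verified Lean document; each statement's English description precedes it below -/
import Mathlib

section
/- For a finite group G, a class function f, H[g,h] = f(g⁻¹h) with all eigenvalues λ_ν = (1/dim ρ_ν)∑_γ |C_γ| f(γ) χ_ν(γ) assumed integral, the time-averaged distribution starting at the identity satisfies: for each g ∈ G, (1/2π)∫₀^{2π} |e^{itH}[g, id]|² dt = (1/|G|²) ∑_{ν,η: λ_ν = λ_η} χ_ν(g) dim(ρ_ν) χ_η(g) dim(ρ_η). -/
set_option linter.unusedSectionVars false
set_option maxHeartbeats 1000000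

open Matrix Finset

variable {G : Type} [Group G] [Fintype G] [DecidableEq G]
variable {ι : Type} [Fintype ι] [DecidableEq ι] {d : ι → ℕ}
variable (ρ : ∀ ν, G →* Matrix (Fin (d ν)) (Fin (d ν)) ℂ)

lemma star_rho (hunitary : ∀ ν g, ρ ν g ∈ Matrix.unitaryGroup (Fin (d ν)) ℂ)
    (ν : ι) (g : G) : star (ρ ν g) = ρ ν g⁻¹ := by
  have h1 : ρ ν g * star (ρ ν g) = 1 := (Matrix.mem_unitaryGroup_iff.mp (hunitary ν g))
  calc star (ρ ν g) = (ρ ν g⁻¹ * ρ ν g) * star (ρ ν g) := by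
        rw [← _root_.map_mul, inv_mul_cancel, _root_.map_one, one_mul]
    _ = ρ ν g⁻¹ := by rw [mul_assoc, h1, mul_one]

lemma intertwiner (ν η : ι) (X : Matrix (Fin (d ν)) (Fin (d η)) ℂ) (g : G) :
    ρ ν g * (∑ k : G, ρ ν k * X * ρ η k⁻¹) = (∑ k : G, ρ ν k * X * ρ η k⁻¹) * ρ η g := by
  rw [Matrix.mul_sum, Matrix.sum_mul]
  refine Fintype.sum_equiv (Equiv.mulLeft g) _ _ fun k => ?_
  simp only [Equiv.coe_mulLeft]
  simp only [_root_.map_mul, Matrix.mul_assoc]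
  rw [← _root_.map_mul]
  congr 2
  group

lemma schur_diag (hirr : ∀ ν, ∀ M : Matrix (Fin (d ν)) (Fin (d ν)) ℂ,
      (∀ g, ρ ν g * M = M * ρ ν g) → ∃ c : ℂ, M = c • (1 : Matrix (Fin (d ν)) (Fin (d ν)) ℂ))
    (ν : ι) (X : Matrix (Fin (d ν)) (Fin (d ν)) ℂ) :
    (∑ k : G, ρ ν k * X * ρ ν k⁻¹) = (((Fintype.card G : ℂ) / (d ν : ℂ)) * X.trace) • 1 := by
  rcases Nat.eq_zero_or_pos (d ν) with h0 | hpos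
  · have : Subsingleton (Matrix (Fin (d ν)) (Fin (d ν)) ℂ) := by
      rw [h0]; infer_instance
    exact Subsingleton.elim _ _
  obtain ⟨c, hc⟩ := hirr ν _ (intertwiner ρ ν ν X)
  have htr : (∑ k : G, ρ ν k * X * ρ ν k⁻¹).trace = (Fintype.card G : ℂ) * X.trace := by
    rw [Matrix.trace_sum]
    have : ∀ k : G, (ρ ν k * X * ρ ν k⁻¹).trace = X.trace := fun k => by
      rw [Matrix.trace_mul_comm, ← mul_assoc, ← _root_.map_mul, inv_mul_cancel, _root_.map_one,
        one_mul]
    simp [this, Finset.card_univ]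
  have hd : (d ν : ℂ) ≠ 0 := Nat.cast_ne_zero.mpr hpos.ne'
  have hcval : c = (Fintype.card G : ℂ) / (d ν : ℂ) * X.trace := by
    have := htr
    rw [hc] at this
    rw [Matrix.trace_smul, Matrix.trace_one] at this
    simp only [Fintype.card_fin, smul_eq_mul] at this
    field_simp
    linear_combination this
  rw [hc, hcval]

lemma schur_off (hdistinct : ∀ ν η, ν ≠ η →
      ¬ ∃ A : Matrix (Fin (d ν)) (Fin (d η)) ℂ, A ≠ 0 ∧ ∀ g, ρ ν g * A = A * ρ η g)
    {ν η : ι} (hne : ν ≠ η) (X : Matrix (Fin (d ν)) (Fin (d η)) ℂ) :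
    (∑ k : G, ρ ν k * X * ρ η k⁻¹) = 0 := by
  by_contra hA
  exact hdistinct ν η hne ⟨_, hA, intertwiner ρ ν η X⟩

lemma entry_mul_std {n m : ℕ} (A : Matrix (Fin n) (Fin n) ℂ) (B : Matrix (Fin m) (Fin m) ℂ)
    (i j : Fin n) (l m' : Fin m) :
    (A * Matrix.single j m' (1:ℂ) * B) i l = A i j * B m' l := by
  simp [Matrix.mul_apply, Matrix.single, Finset.sum_ite_eq, ite_and, mul_ite, ite_mul,
    Finset.mul_sum]

lemma conj_entry (hunitary : ∀ ν g, ρ ν g ∈ Matrix.unitaryGroup (Fin (d ν)) ℂ)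
    (ν : ι) (k : G) (l m : Fin (d ν)) :
    starRingEnd ℂ (ρ ν k l m) = ρ ν k⁻¹ m l := by
  rw [← star_rho ρ hunitary ν k, Matrix.star_apply]
  rfl

lemma ortho_off (hunitary : ∀ ν g, ρ ν g ∈ Matrix.unitaryGroup (Fin (d ν)) ℂ)
    (hdistinct : ∀ ν η, ν ≠ η →
      ¬ ∃ A : Matrix (Fin (d ν)) (Fin (d η)) ℂ, A ≠ 0 ∧ ∀ g, ρ ν g * A = A * ρ η g)
    {ν η : ι} (hne : ν ≠ η) (i j : Fin (d ν)) (l m : Fin (d η)) :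
    ∑ k : G, ρ ν k i j * starRingEnd ℂ (ρ η k l m) = 0 := by
  have h := congrFun (congrFun (schur_off ρ hdistinct hne (Matrix.single j m (1:ℂ))) i) l
  rw [Matrix.sum_apply] at h
  simp only [entry_mul_std, Matrix.zero_apply] at h
  rw [← h]
  refine Finset.sum_congr rfl fun k _ => ?_
  rw [conj_entry ρ hunitary]

lemma ortho_diag (hunitary : ∀ ν g, ρ ν g ∈ Matrix.unitaryGroup (Fin (d ν)) ℂ)
    (hirr : ∀ ν, ∀ M : Matrix (Fin (d ν)) (Fin (d ν)) ℂ,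
      (∀ g, ρ ν g * M = M * ρ ν g) → ∃ c : ℂ, M = c • (1 : Matrix (Fin (d ν)) (Fin (d ν)) ℂ))
    (ν : ι) (i j l m : Fin (d ν)) :
    ∑ k : G, ρ ν k i j * starRingEnd ℂ (ρ ν k l m) =
      ((Fintype.card G : ℂ) / (d ν : ℂ)) *
        (if i = l then 1 else 0) * (if j = m then 1 else 0) := by
  have h := congrFun (congrFun (schur_diag ρ hirr ν (Matrix.single j m (1:ℂ))) i) l
  rw [Matrix.sum_apply] at h
  simp only [entry_mul_std] at h
  have htr : (Matrix.single j m (1:ℂ)).trace = if j = m then 1 else 0 := by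
    simp [Matrix.trace, Matrix.diag, Matrix.single, ite_and, Finset.sum_ite_eq, eq_comm]
  rw [htr] at h
  have : ∑ k : G, ρ ν k i j * starRingEnd ℂ (ρ ν k l m) = ∑ k : G, ρ ν k i j * ρ ν k⁻¹ m l := by
    refine Finset.sum_congr rfl fun k _ => by rw [conj_entry ρ hunitary]
  rw [this, h, Matrix.smul_apply, Matrix.one_apply, smul_eq_mul]
  split <;> split <;> ring

lemma sum_conjClasses (F : G → ℂ) (hF : ∀ g h : G, F (h * g * h⁻¹) = F g) :
    ∑ γ : ConjClasses G, (γ.carrier.ncard : ℂ) * F (Quotient.out γ) = ∑ h : G, F h := by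
  classical
  rw [← Finset.sum_fiberwise Finset.univ ConjClasses.mk F]
  refine Finset.sum_congr rfl fun γ _ => ?_
  have hcard : γ.carrier.ncard =
      (Finset.univ.filter (fun h => ConjClasses.mk h = γ)).card := by
    rw [← Set.ncard_coe_finset]
    congr 1
    ext h
    simp [ConjClasses.mem_carrier_iff_mk_eq]
  have hval : ∀ h ∈ Finset.univ.filter (fun h => ConjClasses.mk h = γ),
      F h = F (Quotient.out γ) := by
    intro h hh
    simp only [Finset.mem_filter] at hh
    have : ConjClasses.mk h = ConjClasses.mk (Quotient.out γ) := by
      rw [hh.2]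
      exact (Quotient.out_eq γ).symm
    obtain ⟨c, hc⟩ := isConj_iff.mp (ConjClasses.mk_eq_mk_iff_isConj.mp this)
    rw [← hc, hF]
  rw [Finset.sum_congr rfl hval, Finset.sum_const, hcard, nsmul_eq_mul]

lemma w_scalar (hirr : ∀ ν, ∀ M : Matrix (Fin (d ν)) (Fin (d ν)) ℂ,
      (∀ g, ρ ν g * M = M * ρ ν g) → ∃ c : ℂ, M = c • (1 : Matrix (Fin (d ν)) (Fin (d ν)) ℂ))
    (f : G → ℂ) (hf : ∀ g h : G, f (h * g * h⁻¹) = f g) (ν : ι) (c : ℂ)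
    (hc : c * (d ν : ℂ) = ∑ h : G, f h * (ρ ν h⁻¹).trace) :
    (∑ h : G, f h • ρ ν h⁻¹) = c • (1 : Matrix (Fin (d ν)) (Fin (d ν)) ℂ) := by
  rcases Nat.eq_zero_or_pos (d ν) with h0 | hpos
  · have : Subsingleton (Matrix (Fin (d ν)) (Fin (d ν)) ℂ) := by rw [h0]; infer_instance
    exact Subsingleton.elim _ _
  have hcomm : ∀ g, ρ ν g * (∑ h : G, f h • ρ ν h⁻¹) = (∑ h : G, f h • ρ ν h⁻¹) * ρ ν g := by
    intro g
    rw [Matrix.mul_sum, Matrix.sum_mul]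
    refine Fintype.sum_equiv ((Equiv.mulRight g⁻¹).trans (Equiv.mulLeft g)) _ _ fun h => ?_
    simp only [Equiv.trans_apply, Equiv.coe_mulLeft, Equiv.coe_mulRight]
    rw [Matrix.mul_smul, Matrix.smul_mul]
    have h1 : f (g * (h * g⁻¹)) = f h := by
      have := hf h g
      simpa [mul_assoc] using this
    have h2 : (g * (h * g⁻¹))⁻¹ * g = g * h⁻¹ := by group
    rw [h1, ← _root_.map_mul, ← _root_.map_mul, h2]
  obtain ⟨c', hc'⟩ := hirr ν _ hcomm
  have htr : (∑ h : G, f h • ρ ν h⁻¹).trace = c * (d ν : ℂ) := by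
    rw [Matrix.trace_sum, hc]
    exact Finset.sum_congr rfl fun h _ => by rw [Matrix.trace_smul, smul_eq_mul]
  rw [hc'] at htr
  rw [Matrix.trace_smul, Matrix.trace_one, smul_eq_mul, Fintype.card_fin] at htr
  have hd : (d ν : ℂ) ≠ 0 := Nat.cast_ne_zero.mpr hpos.ne'
  have : c' = c := mul_right_cancel₀ hd htr
  rw [hc', this]

noncomputable def phi (ρ : ∀ ν, G →* Matrix (Fin (d ν)) (Fin (d ν)) ℂ) :
    (Σ ν : ι, Fin (d ν) × Fin (d ν)) → EuclideanSpace ℂ G :=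
  fun b => WithLp.toLp 2 (fun g => (Real.sqrt ((d b.1 : ℝ) / (Fintype.card G : ℝ)) : ℂ) * ρ b.1 g b.2.1 b.2.2)

lemma phi_orthonormal (hunitary : ∀ ν g, ρ ν g ∈ Matrix.unitaryGroup (Fin (d ν)) ℂ)
    (hirr : ∀ ν, ∀ M : Matrix (Fin (d ν)) (Fin (d ν)) ℂ,
      (∀ g, ρ ν g * M = M * ρ ν g) → ∃ c : ℂ, M = c • (1 : Matrix (Fin (d ν)) (Fin (d ν)) ℂ))
    (hdistinct : ∀ ν η, ν ≠ η →
      ¬ ∃ A : Matrix (Fin (d ν)) (Fin (d η)) ℂ, A ≠ 0 ∧ ∀ g, ρ ν g * A = A * ρ η g) :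
    Orthonormal ℂ (phi ρ) := by
  rw [orthonormal_iff_ite]
  rintro ⟨ν, i, j⟩ ⟨η, l, m⟩
  have hinner : (inner ℂ (phi ρ ⟨ν, i, j⟩) (phi ρ ⟨η, l, m⟩) : ℂ) =
      (Real.sqrt ((d ν : ℝ) / (Fintype.card G : ℝ)) : ℂ) *
      (Real.sqrt ((d η : ℝ) / (Fintype.card G : ℝ)) : ℂ) *
      starRingEnd ℂ (∑ g : G, ρ ν g i j * starRingEnd ℂ (ρ η g l m)) := by
    rw [PiLp.inner_apply, map_sum, Finset.mul_sum]
    refine Finset.sum_congr rfl fun k _ => ?_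
    simp only [phi, PiLp.toLp_apply, RCLike.inner_apply, _root_.map_mul, Complex.conj_ofReal, Complex.conj_conj]
    ring
  by_cases hne : ν = η
  · subst hne
    rw [hinner, ortho_diag ρ hunitary hirr]
    have hGpos : (0:ℝ) < (Fintype.card G : ℝ) := by positivity
    have hdpos : (0:ℕ) < d ν := i.pos
    have hsq : (Real.sqrt ((d ν : ℝ) / (Fintype.card G : ℝ)) : ℂ) *
        (Real.sqrt ((d ν : ℝ) / (Fintype.card G : ℝ)) : ℂ) =
        ((d ν : ℂ) / (Fintype.card G : ℂ)) := by
      rw [← Complex.ofReal_mul, Real.mul_self_sqrt (by positivity)]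
      push_cast
      ring
    rw [hsq]
    simp only [_root_.map_mul, map_div₀, apply_ite (starRingEnd ℂ), _root_.map_one,
      _root_.map_zero, Complex.conj_natCast]
    have h1 : (⟨ν, i, j⟩ : Σ ν : ι, Fin (d ν) × Fin (d ν)) = ⟨ν, l, m⟩ ↔ (i = l ∧ j = m) := by
      simp [Sigma.mk.inj_iff, Prod.ext_iff]
    rw [if_congr h1 rfl rfl]
    have hd : (d ν : ℂ) ≠ 0 := Nat.cast_ne_zero.mpr hdpos.ne'
    have hG : ((Fintype.card G : ℕ) : ℂ) ≠ 0 := Nat.cast_ne_zero.mpr Fintype.card_ne_zero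
    by_cases h2 : i = l <;> by_cases h3 : j = m <;> simp [h2, h3] <;> field_simp
  · rw [hinner, ortho_off ρ hunitary hdistinct hne, map_zero, mul_zero]
    rw [if_neg]
    simp [Sigma.mk.inj_iff, hne]

lemma completeness (hunitary : ∀ ν g, ρ ν g ∈ Matrix.unitaryGroup (Fin (d ν)) ℂ)
    (hirr : ∀ ν, ∀ M : Matrix (Fin (d ν)) (Fin (d ν)) ℂ,
      (∀ g, ρ ν g * M = M * ρ ν g) → ∃ c : ℂ, M = c • (1 : Matrix (Fin (d ν)) (Fin (d ν)) ℂ))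
    (hdistinct : ∀ ν η, ν ≠ η →
      ¬ ∃ A : Matrix (Fin (d ν)) (Fin (d η)) ℂ, A ≠ 0 ∧ ∀ g, ρ ν g * A = A * ρ η g)
    (hcomplete : (∑ ν, (d ν) ^ 2) = Fintype.card G) (u v : EuclideanSpace ℂ G) :
    ∑ b : Σ ν : ι, Fin (d ν) × Fin (d ν), (inner ℂ u (phi ρ b) * inner ℂ (phi ρ b) v : ℂ)
      = (inner ℂ u v : ℂ) := by
  have hcard : Fintype.card (Σ ν : ι, Fin (d ν) × Fin (d ν))
      = Module.finrank ℂ (EuclideanSpace ℂ G) := by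
    simp only [Fintype.card_sigma, Fintype.card_prod, Fintype.card_fin, finrank_euclideanSpace]
    simpa [sq] using hcomplete
  have hne : Nonempty (Σ ν : ι, Fin (d ν) × Fin (d ν)) := by
    rw [← Fintype.card_pos_iff, hcard, finrank_euclideanSpace]
    exact Fintype.card_pos
  have hON := phi_orthonormal ρ hunitary hirr hdistinct
  set bas := basisOfLinearIndependentOfCardEqFinrank hON.linearIndependent hcard with hbas
  have hcoe : ⇑bas = phi ρ := coe_basisOfLinearIndependentOfCardEqFinrank _ _
  have hON' : Orthonormal ℂ ⇑bas := by rw [hcoe]; exact hON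
  have := (bas.toOrthonormalBasis hON').sum_inner_mul_inner u v
  rw [← this]
  refine Finset.sum_congr rfl fun b _ => ?_
  rw [Module.Basis.coe_toOrthonormalBasis, hcoe]

lemma char_conj (ν : ι) (g h : G) : (ρ ν (h * g * h⁻¹)).trace = (ρ ν g).trace := by
  rw [_root_.map_mul, _root_.map_mul, Matrix.trace_mul_comm, ← Matrix.mul_assoc,
    ← _root_.map_mul, inv_mul_cancel, _root_.map_one, Matrix.one_mul]

lemma trace_star {n : ℕ} (A : Matrix (Fin n) (Fin n) ℂ) :
    (star A).trace = starRingEnd ℂ A.trace := by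
  simp [Matrix.trace, Matrix.diag, Matrix.star_apply, map_sum]

lemma lam_eq (hunitary : ∀ ν g, ρ ν g ∈ Matrix.unitaryGroup (Fin (d ν)) ℂ)
    (hreal : ∀ ν g, starRingEnd ℂ (ρ ν g).trace = (ρ ν g).trace)
    (f : G → ℂ) (hf : ∀ g h : G, f (h * g * h⁻¹) = f g) (lam : ι → ℂ)
    (hlam : ∀ ν, lam ν = (1 / (d ν : ℂ)) *
      ∑ γ : ConjClasses G,
        ((γ.carrier.ncard : ℂ) * f (Quotient.out γ) * (ρ ν (Quotient.out γ)).trace)) (ν : ι) :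
    lam ν * (d ν : ℂ) = ∑ h : G, f h * (ρ ν h⁻¹).trace := by
  have hinv : ∀ h : G, (ρ ν h⁻¹).trace = (ρ ν h).trace := by
    intro h
    rw [← star_rho ρ hunitary, trace_star, hreal]
  have hclass : ∑ γ : ConjClasses G,
      ((γ.carrier.ncard : ℂ) * f (Quotient.out γ) * (ρ ν (Quotient.out γ)).trace)
      = ∑ h : G, f h * (ρ ν h).trace := by
    rw [← sum_conjClasses (F := fun x => f x * (ρ ν x).trace)
      (fun g h => by rw [hf, char_conj])]
    refine Finset.sum_congr rfl fun γ _ => by ring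
  rcases Nat.eq_zero_or_pos (d ν) with h0 | hpos
  · have : ∀ h : G, (ρ ν h⁻¹).trace = 0 := fun h => by
      rw [Matrix.trace]
      have : IsEmpty (Fin (d ν)) := by rw [h0]; infer_instance
      simp
    simp [this, h0]
  · have hd : (d ν : ℂ) ≠ 0 := Nat.cast_ne_zero.mpr hpos.ne'
    have heq : ∑ h : G, f h * (ρ ν h⁻¹).trace = ∑ h : G, f h * (ρ ν h).trace :=
      Finset.sum_congr rfl fun h _ => by rw [hinv]
    rw [hlam, hclass, heq]
    field_simp

lemma delta_sum (hunitary : ∀ ν g, ρ ν g ∈ Matrix.unitaryGroup (Fin (d ν)) ℂ)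
    (hirr : ∀ ν, ∀ M : Matrix (Fin (d ν)) (Fin (d ν)) ℂ,
      (∀ g, ρ ν g * M = M * ρ ν g) → ∃ c : ℂ, M = c • (1 : Matrix (Fin (d ν)) (Fin (d ν)) ℂ))
    (hdistinct : ∀ ν η, ν ≠ η →
      ¬ ∃ A : Matrix (Fin (d ν)) (Fin (d η)) ℂ, A ≠ 0 ∧ ∀ g, ρ ν g * A = A * ρ η g)
    (hcomplete : (∑ ν, (d ν) ^ 2) = Fintype.card G) (z : G) :
    ∑ ν, ((d ν : ℂ) / (Fintype.card G : ℂ)) * (ρ ν z).trace = if z = 1 then 1 else 0 := by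
  have h := completeness ρ hunitary hirr hdistinct hcomplete
    (EuclideanSpace.single z (1:ℂ)) (EuclideanSpace.single (1:G) (1:ℂ))
  have hsq : ∀ ν : ι, ((Real.sqrt ((d ν : ℝ) / (Fintype.card G : ℝ)) : ℝ) : ℂ) *
      ((Real.sqrt ((d ν : ℝ) / (Fintype.card G : ℝ)) : ℝ) : ℂ)
      = (d ν : ℂ) / (Fintype.card G : ℂ) := by
    intro ν
    rw [← Complex.ofReal_mul, Real.mul_self_sqrt (by positivity)]
    push_cast
    ring
  have key : ∀ b : Σ ν : ι, Fin (d ν) × Fin (d ν),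
      (inner ℂ (EuclideanSpace.single z (1:ℂ)) (phi ρ b) * inner ℂ (phi ρ b)
        (EuclideanSpace.single (1:G) (1:ℂ)) : ℂ)
      = ((d b.1 : ℂ) / (Fintype.card G : ℂ)) * ρ b.1 z b.2.1 b.2.2 *
        (if b.2.1 = b.2.2 then 1 else 0) := by
    rintro ⟨ν, i, j⟩
    rw [EuclideanSpace.inner_single_left, EuclideanSpace.inner_single_right]
    simp only [phi, PiLp.toLp_apply, _root_.map_one, one_mul, _root_.map_mul, Complex.conj_ofReal,
      Matrix.one_apply, apply_ite (starRingEnd ℂ), _root_.map_zero]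
    rcases eq_or_ne i j with hij | hij
    · simp only [hij, if_pos rfl]
      rw [← hsq ν]
      ring
    · simp only [if_neg hij]
      ring
  rw [Finset.sum_congr rfl (fun b _ => key b)] at h
  rw [EuclideanSpace.inner_single_left, EuclideanSpace.single_apply] at h
  rw [← Finset.univ_sigma_univ, Finset.sum_sigma] at h
  simp only [_root_.map_one, one_mul] at h
  rw [← h]
  refine Finset.sum_congr rfl fun ν _ => ?_
  rw [Fintype.sum_prod_type, Matrix.trace, Finset.mul_sum]
  refine Finset.sum_congr rfl fun i _ => ?_
  simp [Matrix.diag, mul_ite, Finset.sum_ite_eq]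

lemma f_expand (hunitary : ∀ ν g, ρ ν g ∈ Matrix.unitaryGroup (Fin (d ν)) ℂ)
    (hirr : ∀ ν, ∀ M : Matrix (Fin (d ν)) (Fin (d ν)) ℂ,
      (∀ g, ρ ν g * M = M * ρ ν g) → ∃ c : ℂ, M = c • (1 : Matrix (Fin (d ν)) (Fin (d ν)) ℂ))
    (hdistinct : ∀ ν η, ν ≠ η →
      ¬ ∃ A : Matrix (Fin (d ν)) (Fin (d η)) ℂ, A ≠ 0 ∧ ∀ g, ρ ν g * A = A * ρ η g)
    (hcomplete : (∑ ν, (d ν) ^ 2) = Fintype.card G)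
    (hreal : ∀ ν g, starRingEnd ℂ (ρ ν g).trace = (ρ ν g).trace)
    (f : G → ℂ) (hf : ∀ g h : G, f (h * g * h⁻¹) = f g) (lam : ι → ℂ)
    (hlam : ∀ ν, lam ν = (1 / (d ν : ℂ)) *
      ∑ γ : ConjClasses G,
        ((γ.carrier.ncard : ℂ) * f (Quotient.out γ) * (ρ ν (Quotient.out γ)).trace))
    (x : G) :
    f x = ∑ ν, ((d ν : ℂ) / (Fintype.card G : ℂ)) * lam ν * (ρ ν x).trace := by
  have hsq : ∀ ν : ι, ((Real.sqrt ((d ν : ℝ) / (Fintype.card G : ℝ)) : ℝ) : ℂ) *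
      ((Real.sqrt ((d ν : ℝ) / (Fintype.card G : ℝ)) : ℝ) : ℂ)
      = (d ν : ℂ) / (Fintype.card G : ℂ) := by
    intro ν
    rw [← Complex.ofReal_mul, Real.mul_self_sqrt (by positivity)]
    push_cast
    ring
  set v : EuclideanSpace ℂ G := WithLp.toLp 2 (fun h => f h) with hv
  have h := completeness ρ hunitary hirr hdistinct hcomplete (EuclideanSpace.single x 1) v
  have key : ∀ b : Σ ν : ι, Fin (d ν) × Fin (d ν),
      (inner ℂ (EuclideanSpace.single x (1:ℂ)) (phi ρ b) * inner ℂ (phi ρ b) v : ℂ)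
      = ((d b.1 : ℂ) / (Fintype.card G : ℂ)) * lam b.1 * ρ b.1 x b.2.1 b.2.2 *
        (if b.2.2 = b.2.1 then 1 else 0) := by
    rintro ⟨ν, i, j⟩
    have hw := w_scalar ρ hirr f hf ν (lam ν) (lam_eq ρ hunitary hreal f hf lam hlam ν)
    have hin : (inner ℂ (phi ρ ⟨ν, i, j⟩) v : ℂ) =
        ((Real.sqrt ((d ν : ℝ) / (Fintype.card G : ℝ)) : ℝ) : ℂ) *
          (lam ν * (if j = i then 1 else 0)) := by
      rw [PiLp.inner_apply]
      have step1 : ∀ k : G, (inner ℂ (phi ρ ⟨ν, i, j⟩ k) (v k) : ℂ) =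
          ((Real.sqrt ((d ν : ℝ) / (Fintype.card G : ℝ)) : ℝ) : ℂ) * (f k * ρ ν k⁻¹ j i) := by
        intro k
        simp only [phi, PiLp.toLp_apply, RCLike.inner_apply, _root_.map_mul, Complex.conj_ofReal, hv]
        rw [conj_entry ρ hunitary]
        ring
      rw [Finset.sum_congr rfl fun k _ => step1 k, ← Finset.mul_sum]
      congr 1
      have : ∑ k : G, f k * ρ ν k⁻¹ j i = (∑ k : G, f k • ρ ν k⁻¹) j i := by
        rw [Matrix.sum_apply]
        exact Finset.sum_congr rfl fun k _ => rfl
      rw [this, hw, Matrix.smul_apply, Matrix.one_apply, smul_eq_mul]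
    rw [EuclideanSpace.inner_single_left, hin]
    simp only [phi, PiLp.toLp_apply, _root_.map_one, one_mul]
    rcases eq_or_ne j i with hij | hij
    · simp only [hij, if_pos rfl]
      rw [← hsq ν]
      ring
    · simp only [if_neg hij]
      ring
  rw [Finset.sum_congr rfl (fun b _ => key b), EuclideanSpace.inner_single_left] at h
  simp only [_root_.map_one, one_mul] at h
  rw [← Finset.univ_sigma_univ, Finset.sum_sigma] at h
  have hvx : v x = f x := rfl
  rw [hvx] at h
  rw [← h]
  refine Finset.sum_congr rfl fun ν _ => ?_
  rw [Fintype.sum_prod_type, Matrix.trace, Finset.mul_sum]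
  refine Finset.sum_congr rfl fun i _ => ?_
  simp [Matrix.diag, mul_ite, Finset.sum_ite_eq, Finset.sum_ite_eq']

lemma char_ortho_off (hunitary : ∀ ν g, ρ ν g ∈ Matrix.unitaryGroup (Fin (d ν)) ℂ)
    (hdistinct : ∀ ν η, ν ≠ η →
      ¬ ∃ A : Matrix (Fin (d ν)) (Fin (d η)) ℂ, A ≠ 0 ∧ ∀ g, ρ ν g * A = A * ρ η g)
    {ν η : ι} (hne : ν ≠ η) :
    ∑ h : G, (ρ ν h).trace * starRingEnd ℂ ((ρ η h).trace) = 0 := by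
  have : ∀ h : G, (ρ ν h).trace * starRingEnd ℂ ((ρ η h).trace)
      = ∑ i : Fin (d ν), ∑ l : Fin (d η), ρ ν h i i * starRingEnd ℂ (ρ η h l l) := by
    intro h
    simp [Matrix.trace, Matrix.diag, map_sum, Finset.sum_mul_sum]
  rw [Finset.sum_congr rfl fun h _ => this h, Finset.sum_comm]
  refine Finset.sum_eq_zero fun i _ => ?_
  rw [Finset.sum_comm]
  refine Finset.sum_eq_zero fun l _ => ?_
  exact ortho_off ρ hunitary hdistinct hne i i l l

lemma char_ortho_diag (hunitary : ∀ ν g, ρ ν g ∈ Matrix.unitaryGroup (Fin (d ν)) ℂ)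
    (hirr : ∀ ν, ∀ M : Matrix (Fin (d ν)) (Fin (d ν)) ℂ,
      (∀ g, ρ ν g * M = M * ρ ν g) → ∃ c : ℂ, M = c • (1 : Matrix (Fin (d ν)) (Fin (d ν)) ℂ))
    (ν : ι) :
    ∑ h : G, (ρ ν h).trace * starRingEnd ℂ ((ρ ν h).trace)
      = (Fintype.card G : ℂ) / (d ν : ℂ) * (d ν : ℂ) := by
  have : ∀ h : G, (ρ ν h).trace * starRingEnd ℂ ((ρ ν h).trace)
      = ∑ i : Fin (d ν), ∑ l : Fin (d ν), ρ ν h i i * starRingEnd ℂ (ρ ν h l l) := by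
    intro h
    simp [Matrix.trace, Matrix.diag, map_sum, Finset.sum_mul_sum]
  rw [Finset.sum_congr rfl fun h _ => this h, Finset.sum_comm]
  have inner : ∀ i : Fin (d ν), ∑ h : G, ∑ l : Fin (d ν), ρ ν h i i * starRingEnd ℂ (ρ ν h l l)
      = (Fintype.card G : ℂ) / (d ν : ℂ) := by
    intro i
    rw [Finset.sum_comm]
    rw [Finset.sum_congr rfl fun l _ => ortho_diag ρ hunitary hirr ν i i l l]
    simp [Finset.sum_ite_eq, mul_ite, ite_mul]
  rw [Finset.sum_congr rfl fun i _ => inner i, Finset.sum_const, Finset.card_univ,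
    Fintype.card_fin, nsmul_eq_mul]
  ring

lemma conv (hunitary : ∀ ν g, ρ ν g ∈ Matrix.unitaryGroup (Fin (d ν)) ℂ)
    (hirr : ∀ ν, ∀ M : Matrix (Fin (d ν)) (Fin (d ν)) ℂ,
      (∀ g, ρ ν g * M = M * ρ ν g) → ∃ c : ℂ, M = c • (1 : Matrix (Fin (d ν)) (Fin (d ν)) ℂ))
    (hdistinct : ∀ ν η, ν ≠ η →
      ¬ ∃ A : Matrix (Fin (d ν)) (Fin (d η)) ℂ, A ≠ 0 ∧ ∀ g, ρ ν g * A = A * ρ η g)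
    (hreal : ∀ ν g, starRingEnd ℂ (ρ ν g).trace = (ρ ν g).trace)
    (ν η : ι) (a b : G) :
    ∑ k : G, (ρ ν (a * k)).trace * (ρ η (k⁻¹ * b)).trace
      = if ν = η then ((Fintype.card G : ℂ) / (d ν : ℂ)) * (ρ ν (a * b)).trace else 0 := by
  have hχclass : ∀ g h : G, (fun x => (ρ η x).trace) (h * g * h⁻¹) = (fun x => (ρ η x).trace) g :=
    fun g h => char_conj ρ η g h
  have hχinv : ∀ (μ : ι) (h : G), (ρ μ h⁻¹).trace = starRingEnd ℂ ((ρ μ h).trace) := by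
    intro μ h
    rw [← star_rho ρ hunitary, trace_star]
  rcases Nat.eq_zero_or_pos (d ν) with h0 | hpos
  · have hemp : IsEmpty (Fin (d ν)) := by rw [h0]; infer_instance
    have hz : ∀ k : G, (ρ ν k).trace = 0 := fun k => by simp [Matrix.trace]
    split_ifs <;> simp [hz]
  have hd : (d ν : ℂ) ≠ 0 := Nat.cast_ne_zero.mpr hpos.ne'
  -- the scalar value c
  set c : ℂ := if ν = η then (Fintype.card G : ℂ) / (d ν : ℂ) else 0 with hcdef
  have hc : c * (d ν : ℂ) = ∑ h : G, (ρ η h).trace * (ρ ν h⁻¹).trace := by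
    have : ∑ h : G, (ρ η h).trace * (ρ ν h⁻¹).trace
        = ∑ h : G, (ρ η h).trace * starRingEnd ℂ ((ρ ν h).trace) :=
      Finset.sum_congr rfl fun h _ => by rw [hχinv]
    rw [this, hcdef]
    by_cases hne : ν = η
    · subst hne
      rw [if_pos rfl, char_ortho_diag ρ hunitary hirr]
    · rw [if_neg hne, char_ortho_off ρ hunitary hdistinct (fun h => hne h.symm), zero_mul]
  have hT := w_scalar ρ hirr (fun x => (ρ η x).trace) hχclass ν c hc
  -- rewrite the LHS as a trace
  have hstep1 : ∑ k : G, (ρ ν (a * k)).trace * (ρ η (k⁻¹ * b)).trace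
      = (ρ ν a * ∑ k : G, (ρ η (k⁻¹ * b)).trace • ρ ν k).trace := by
    rw [Matrix.mul_sum, Matrix.trace_sum]
    refine Finset.sum_congr rfl fun k _ => ?_
    rw [Matrix.mul_smul, Matrix.trace_smul, smul_eq_mul, _root_.map_mul]
    ring
  have hstep2 : ∑ k : G, (ρ η (k⁻¹ * b)).trace • ρ ν k
      = ρ ν b * ∑ h : G, (ρ η h).trace • ρ ν h⁻¹ := by
    rw [Matrix.mul_sum]
    refine Fintype.sum_equiv ((Equiv.inv G).trans (Equiv.mulRight b)) _ _ fun h => ?_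
    simp only [Equiv.trans_apply, Equiv.inv_apply, Equiv.coe_mulRight]
    have h1 : b * (h⁻¹ * b)⁻¹ = h := by group
    rw [Matrix.mul_smul, ← _root_.map_mul, h1]
  rw [hstep1, hstep2, hT]
  rw [Matrix.mul_smul, Matrix.mul_one, Matrix.mul_smul, Matrix.trace_smul, smul_eq_mul,
    ← _root_.map_mul]
  rw [hcdef]
  split_ifs <;> ring

lemma pow_of_proj {n : Type} [Fintype n] [DecidableEq n] (P : ι → Matrix n n ℂ) (lam : ι → ℂ)
    (hsum : ∑ ν, P ν = 1) (hmul : ∀ ν η, P ν * P η = if ν = η then P ν else 0) (m : ℕ) :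
    (∑ ν, lam ν • P ν) ^ m = ∑ ν, (lam ν ^ m) • P ν := by
  induction m with
  | zero => simp [hsum]
  | succ m ih =>
    rw [pow_succ, ih, Finset.sum_mul_sum]
    refine Finset.sum_congr rfl fun ν _ => ?_
    have hterm : ∀ η : ι, (lam ν ^ m • P ν) * (lam η • P η)
        = if ν = η then (lam ν ^ m * lam η) • P ν else 0 := by
      intro η
      rw [Matrix.smul_mul, Matrix.mul_smul, hmul ν η, smul_ite, smul_ite, smul_zero, smul_zero,
        smul_smul]
    rw [Finset.sum_congr rfl fun η _ => hterm η,
      Finset.sum_ite_eq Finset.univ ν (fun η => (lam ν ^ m * lam η) • P ν),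
      if_pos (Finset.mem_univ ν), pow_succ]

lemma exp_of_proj {n : Type} [Fintype n] [DecidableEq n] (P : ι → Matrix n n ℂ) (lam : ι → ℂ)
    (hsum : ∑ ν, P ν = 1) (hmul : ∀ ν η, P ν * P η = if ν = η then P ν else 0) :
    NormedSpace.exp (∑ ν, lam ν • P ν) = ∑ ν, Complex.exp (lam ν) • P ν := by
  simp only [NormedSpace.exp_eq_tsum (𝕂 := ℂ)]
  have h1 : ∀ m : ℕ, ((m.factorial : ℂ))⁻¹ • (∑ ν, lam ν • P ν) ^ m
      = ∑ ν, (((m.factorial : ℂ))⁻¹ * lam ν ^ m) • P ν := by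
    intro m
    rw [pow_of_proj P lam hsum hmul, Finset.smul_sum]
    exact Finset.sum_congr rfl fun ν _ => by rw [smul_smul]
  rw [tsum_congr h1]
  have hsummable : ∀ ν : ι, Summable (fun m : ℕ => ((m.factorial : ℂ))⁻¹ * lam ν ^ m) := by
    intro ν
    simpa [smul_eq_mul] using NormedSpace.expSeries_summable' (𝕂 := ℂ) (lam ν)
  rw [Summable.tsum_finsetSum (fun ν _ => (hsummable ν).smul_const (P ν))]
  refine Finset.sum_congr rfl fun ν _ => ?_
  rw [Summable.tsum_smul_const (hsummable ν)]
  congr 1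
  rw [Complex.exp_eq_exp_ℂ, NormedSpace.exp_eq_tsum (𝕂 := ℂ)]
  exact (tsum_congr fun m => by rw [smul_eq_mul]).symm

noncomputable def Pmat (ρ : ∀ ν, G →* Matrix (Fin (d ν)) (Fin (d ν)) ℂ) (ν : ι) :
    Matrix G G ℂ :=
  Matrix.of fun x y => ((d ν : ℂ) / (Fintype.card G : ℂ)) * (ρ ν (x⁻¹ * y)).trace

lemma Pmat_sum (hunitary : ∀ ν g, ρ ν g ∈ Matrix.unitaryGroup (Fin (d ν)) ℂ)
    (hirr : ∀ ν, ∀ M : Matrix (Fin (d ν)) (Fin (d ν)) ℂ,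
      (∀ g, ρ ν g * M = M * ρ ν g) → ∃ c : ℂ, M = c • (1 : Matrix (Fin (d ν)) (Fin (d ν)) ℂ))
    (hdistinct : ∀ ν η, ν ≠ η →
      ¬ ∃ A : Matrix (Fin (d ν)) (Fin (d η)) ℂ, A ≠ 0 ∧ ∀ g, ρ ν g * A = A * ρ η g)
    (hcomplete : (∑ ν, (d ν) ^ 2) = Fintype.card G) :
    ∑ ν, Pmat ρ ν = (1 : Matrix G G ℂ) := by
  ext x y
  rw [Matrix.sum_apply]
  have := delta_sum ρ hunitary hirr hdistinct hcomplete (x⁻¹ * y)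
  simp only [Pmat, Matrix.of_apply] at this ⊢
  rw [this, Matrix.one_apply]
  congr 1
  simp [inv_mul_eq_one, eq_comm]

lemma Pmat_mul (hunitary : ∀ ν g, ρ ν g ∈ Matrix.unitaryGroup (Fin (d ν)) ℂ)
    (hirr : ∀ ν, ∀ M : Matrix (Fin (d ν)) (Fin (d ν)) ℂ,
      (∀ g, ρ ν g * M = M * ρ ν g) → ∃ c : ℂ, M = c • (1 : Matrix (Fin (d ν)) (Fin (d ν)) ℂ))
    (hdistinct : ∀ ν η, ν ≠ η →
      ¬ ∃ A : Matrix (Fin (d ν)) (Fin (d η)) ℂ, A ≠ 0 ∧ ∀ g, ρ ν g * A = A * ρ η g)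
    (hreal : ∀ ν g, starRingEnd ℂ (ρ ν g).trace = (ρ ν g).trace)
    (ν η : ι) : Pmat ρ ν * Pmat ρ η = if ν = η then Pmat ρ ν else 0 := by
  ext x y
  rw [Matrix.mul_apply]
  have hconv := conv ρ hunitary hirr hdistinct hreal ν η x⁻¹ y
  have hstep : ∑ k : G, Pmat ρ ν x k * Pmat ρ η k y
      = ((d ν : ℂ) / (Fintype.card G : ℂ)) * ((d η : ℂ) / (Fintype.card G : ℂ)) *
        ∑ k : G, (ρ ν (x⁻¹ * k)).trace * (ρ η (k⁻¹ * y)).trace := by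
    rw [Finset.mul_sum]
    exact Finset.sum_congr rfl fun k _ => by simp only [Pmat, Matrix.of_apply]; ring
  rw [hstep, hconv]
  by_cases hne : ν = η
  · subst hne
    rw [if_pos rfl, if_pos rfl]
    simp only [Pmat, Matrix.of_apply]
    rcases Nat.eq_zero_or_pos (d ν) with h0 | hpos
    · have hemp : IsEmpty (Fin (d ν)) := by rw [h0]; infer_instance
      simp [Matrix.trace, h0]
    · have hd : (d ν : ℂ) ≠ 0 := Nat.cast_ne_zero.mpr hpos.ne'
      have hG : ((Fintype.card G : ℕ) : ℂ) ≠ 0 := Nat.cast_ne_zero.mpr Fintype.card_ne_zero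
      field_simp
  · rw [if_neg hne, if_neg hne, Matrix.zero_apply, mul_zero]

lemma integral_exp_eq (w : ℂ) (hw : ∃ m : ℤ, w = (m : ℂ)) :
    ∫ t in (0:ℝ)..(2*Real.pi), Complex.exp (Complex.I * (t:ℂ) * w)
      = if w = 0 then ((2*Real.pi : ℝ) : ℂ) else 0 := by
  obtain ⟨m, rfl⟩ := hw
  by_cases h0 : (m : ℂ) = 0
  · rw [if_pos h0]
    simp only [h0, mul_zero, Complex.exp_zero]
    rw [intervalIntegral.integral_const]
    simp
  · rw [if_neg h0]
    have hc : Complex.I * (m : ℂ) ≠ 0 := mul_ne_zero Complex.I_ne_zero h0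
    have : ∀ t : ℝ, Complex.exp (Complex.I * (t:ℂ) * (m : ℂ))
        = Complex.exp ((Complex.I * (m : ℂ)) * (t:ℂ)) := fun t => by ring_nf
    rw [intervalIntegral.integral_congr (fun t _ => this t), integral_exp_mul_complex hc]
    have h2 : Complex.I * (m:ℂ) * ((2*Real.pi : ℝ):ℂ) = (m : ℂ) * (2 * (Real.pi:ℂ) * Complex.I) := by
      push_cast
      ring
    rw [h2, Complex.exp_int_mul_two_pi_mul_I]
    simp

lemma time_avg (c lam : ι → ℂ) (hint : ∀ ν, ∃ m : ℤ, lam ν = (m : ℂ)) :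
    (((1 / (2 * Real.pi)) * ∫ t in (0:ℝ)..(2*Real.pi),
        ‖∑ ν, Complex.exp (Complex.I * (t:ℂ) * lam ν) * c ν‖ ^ 2 : ℝ) : ℂ)
    = ∑ ν, ∑ η, if lam ν = lam η then c ν * starRingEnd ℂ (c η) else 0 := by
  have hreal : ∀ ν, starRingEnd ℂ (lam ν) = lam ν := by
    intro ν
    obtain ⟨m, hm⟩ := hint ν
    rw [hm, map_intCast]
  set F : ℝ → ℂ := fun t => ∑ ν, Complex.exp (Complex.I * (t:ℂ) * lam ν) * c ν with hF
  have habs : ∀ t : ℝ, ((‖F t‖ ^ 2 : ℝ) : ℂ)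
      = ∑ ν, ∑ η, Complex.exp (Complex.I * (t:ℂ) * (lam ν - lam η)) * (c ν * starRingEnd ℂ (c η)) := by
    intro t
    have h1 : ((‖F t‖ ^ 2 : ℝ) : ℂ) = F t * starRingEnd ℂ (F t) := by
      rw [Complex.mul_conj]
      norm_cast
      rw [Complex.sq_norm]
    rw [h1, hF]
    simp only [map_sum, _root_.map_mul]
    rw [Finset.sum_mul_sum]
    refine Finset.sum_congr rfl fun ν _ => Finset.sum_congr rfl fun η _ => ?_
    have h2 : starRingEnd ℂ (Complex.exp (Complex.I * (t:ℂ) * lam η))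
        = Complex.exp (-(Complex.I * (t:ℂ) * lam η)) := by
      rw [← Complex.exp_conj]
      congr 1
      simp only [_root_.map_mul, Complex.conj_I, Complex.conj_ofReal, hreal]
      ring
    rw [h2, mul_mul_mul_comm, ← Complex.exp_add]
    congr 2
    ring
  have hint1 : ∫ t in (0:ℝ)..(2*Real.pi), ((‖F t‖ ^ 2 : ℝ) : ℂ)
      = ∑ ν, ∑ η, (if lam ν - lam η = 0 then ((2*Real.pi : ℝ) : ℂ) else 0)
          * (c ν * starRingEnd ℂ (c η)) := by
    simp_rw [habs]
    rw [intervalIntegral.integral_finset_sum (fun ν _ => by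
      apply Continuous.intervalIntegrable; fun_prop)]
    refine Finset.sum_congr rfl fun ν _ => ?_
    rw [intervalIntegral.integral_finset_sum (fun η _ => by
      apply Continuous.intervalIntegrable; fun_prop)]
    refine Finset.sum_congr rfl fun η _ => ?_
    rw [intervalIntegral.integral_mul_const]
    congr 1
    obtain ⟨mν, hν⟩ := hint ν
    obtain ⟨mη, hη⟩ := hint η
    have : ∃ m : ℤ, lam ν - lam η = (m : ℂ) := ⟨mν - mη, by push_cast [hν, hη]; ring⟩
    exact integral_exp_eq _ this
  -- put it together
  have hcast : (((1 / (2 * Real.pi)) * ∫ t in (0:ℝ)..(2*Real.pi),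
      ‖F t‖ ^ 2 : ℝ) : ℂ)
      = ((1 / (2 * Real.pi) : ℝ) : ℂ) * ∫ t in (0:ℝ)..(2*Real.pi), ((‖F t‖ ^ 2 : ℝ) : ℂ) := by
    rw [Complex.ofReal_mul, intervalIntegral.integral_ofReal]
  rw [hcast, hint1, Finset.mul_sum]
  refine Finset.sum_congr rfl fun ν _ => ?_
  rw [Finset.mul_sum]
  refine Finset.sum_congr rfl fun η _ => ?_
  have hpi : (Real.pi : ℂ) ≠ 0 := Complex.ofReal_ne_zero.mpr Real.pi_ne_zero
  rw [if_congr sub_eq_zero rfl rfl]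
  by_cases h : lam ν = lam η
  · rw [if_pos h, if_pos h]
    push_cast
    field_simp
  · rw [if_neg h, if_neg h, zero_mul, mul_zero]


/-- Time-averaged distribution of the quantum walk: for a finite group `G` with a complete
family of pairwise inequivalent irreducible unitary matrix representations (with real
characters), a class function `f`, `H[g,h] = f(g⁻¹h)`, and integral eigenvalues
`λ_ν = (1/dim ρ_ν) ∑_γ |C_γ| f(γ) χ_ν(γ)`, for each `g ∈ G`:
`(1/2π) ∫₀^{2π} |e^{itH}[g, id]|² dt
  = (1/|G|²) ∑_{ν,η : λ_ν = λ_η} χ_ν(g) dim(ρ_ν) χ_η(g) dim(ρ_η)`. -/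
theorem stmt_12 {G : Type} [Group G] [Fintype G] [DecidableEq G]
    {ι : Type} [Fintype ι] [DecidableEq ι] (d : ι → ℕ)
    (ρ : ∀ ν, G →* Matrix (Fin (d ν)) (Fin (d ν)) ℂ)
    (hunitary : ∀ ν g, ρ ν g ∈ Matrix.unitaryGroup (Fin (d ν)) ℂ)
    (hirr : ∀ ν, ∀ M : Matrix (Fin (d ν)) (Fin (d ν)) ℂ,
      (∀ g, ρ ν g * M = M * ρ ν g) → ∃ c : ℂ, M = c • (1 : Matrix (Fin (d ν)) (Fin (d ν)) ℂ))
    (hdistinct : ∀ ν η, ν ≠ η →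
      ¬ ∃ A : Matrix (Fin (d ν)) (Fin (d η)) ℂ, A ≠ 0 ∧ ∀ g, ρ ν g * A = A * ρ η g)
    (hcomplete : (∑ ν, (d ν) ^ 2) = Fintype.card G)
    (hreal : ∀ ν g, starRingEnd ℂ (ρ ν g).trace = (ρ ν g).trace)
    (f : G → ℂ) (hf : ∀ g h : G, f (h * g * h⁻¹) = f g)
    (lam : ι → ℂ)
    (hlam : ∀ ν, lam ν = (1 / (d ν : ℂ)) *
      ∑ γ : ConjClasses G,
        ((γ.carrier.ncard : ℂ) * f (Quotient.out γ) * (ρ ν (Quotient.out γ)).trace))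
    (hint : ∀ ν, ∃ m : ℤ, lam ν = (m : ℂ))
    (H : Matrix G G ℂ) (hH : H = Matrix.of fun g h => f (g⁻¹ * h))
    (g : G) :
    (((1 / (2 * Real.pi)) *
        ∫ t in (0 : ℝ)..(2 * Real.pi),
          ‖(NormedSpace.exp ((Complex.I * (t : ℂ)) • H)) g 1‖ ^ 2 : ℝ) : ℂ) =
      (1 / (Fintype.card G : ℂ) ^ 2) *
        ∑ ν, ∑ η,
          if lam ν = lam η then
            (ρ ν g).trace * (d ν : ℂ) * (ρ η g).trace * (d η : ℂ)
          else 0 := by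
  classical
  set cc : ι → ℂ := fun ν => ((d ν : ℂ) / (Fintype.card G : ℂ)) * (ρ ν g⁻¹).trace with hcc
  have hχinv : ∀ (μ : ι) (x : G), (ρ μ x⁻¹).trace = (ρ μ x).trace := by
    intro μ x
    rw [← star_rho ρ hunitary, trace_star, hreal]
  have hHsum : H = ∑ ν, lam ν • Pmat ρ ν := by
    rw [hH]
    ext x y
    rw [Matrix.sum_apply]
    have hfe := f_expand ρ hunitary hirr hdistinct hcomplete hreal f hf lam hlam (x⁻¹ * y)
    simp only [Matrix.of_apply, Pmat, Matrix.smul_apply, smul_eq_mul]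
    rw [hfe]
    exact Finset.sum_congr rfl fun ν _ => by ring
  have hentry : ∀ t : ℝ, (NormedSpace.exp ((Complex.I * (t:ℂ)) • H)) g 1
      = ∑ ν, Complex.exp (Complex.I * (t:ℂ) * lam ν) * cc ν := by
    intro t
    have h1 : (Complex.I * (t:ℂ)) • H = ∑ ν, ((Complex.I * (t:ℂ)) * lam ν) • Pmat ρ ν := by
      rw [hHsum, Finset.smul_sum]
      exact Finset.sum_congr rfl fun ν _ => by rw [smul_smul]
    rw [h1, exp_of_proj (Pmat ρ) _ (Pmat_sum ρ hunitary hirr hdistinct hcomplete)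
      (Pmat_mul ρ hunitary hirr hdistinct hreal), Matrix.sum_apply]
    refine Finset.sum_congr rfl fun ν _ => ?_
    simp only [Matrix.smul_apply, Pmat, Matrix.of_apply, smul_eq_mul, hcc, mul_one]
  have hInt : (∫ t in (0:ℝ)..(2*Real.pi),
        ‖(NormedSpace.exp ((Complex.I * (t : ℂ)) • H)) g 1‖ ^ 2)
      = ∫ t in (0:ℝ)..(2*Real.pi),
        ‖∑ ν, Complex.exp (Complex.I * (t:ℂ) * lam ν) * cc ν‖ ^ 2 := by
    apply intervalIntegral.integral_congr
    intro t _
    dsimp only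
    rw [hentry t]
  rw [hInt, time_avg cc lam hint, Finset.mul_sum]
  refine Finset.sum_congr rfl fun ν _ => ?_
  rw [Finset.mul_sum]
  refine Finset.sum_congr rfl fun η _ => ?_
  by_cases h : lam ν = lam η
  · rw [if_pos h, if_pos h]
    have hN : ((Fintype.card G : ℕ) : ℂ) ≠ 0 := Nat.cast_ne_zero.mpr Fintype.card_ne_zero
    have hconj : starRingEnd ℂ (cc η) = ((d η : ℂ) / (Fintype.card G : ℂ)) * (ρ η g).trace := by
      rw [hcc]
      simp only [_root_.map_mul, map_div₀, Complex.conj_natCast]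
      rw [hχinv, hreal]
    rw [hconj, hcc]
    simp only [hχinv]
    field_simp
  · rw [if_neg h, if_neg h, mul_zero]
end

section
/- For even p with 2 ≤ p ≤ n−1, the identity (1/C(n−1,k−1)) · (C(n−p−1, k−p−1) − C(n−p−1, k−1)) = (1/C(n−1,p)) · (C(k−1, p) − C(n−k, p)) holds for all 1 ≤ k ≤ n. -/
lemma aux_L2 (n p k : ℕ) (hpn : p ≤ n - 1) (hk : 1 ≤ k) (hkn : k ≤ n) :
    (n - 1).choose p * (n - p - 1).choose (k - 1) =
      (n - 1).choose (k - 1) * (n - k).choose p := by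
  by_cases h : p + (k - 1) ≤ n - 1
  · have h1 := Nat.choose_mul (n := n - 1) (k := p + (k - 1)) (s := p) (Nat.le_add_right _ _)
    have h2 := Nat.choose_mul (n := n - 1) (k := p + (k - 1)) (s := k - 1) (Nat.le_add_left _ _)
    have e0 : p + (k - 1) - p = k - 1 := by omega
    have e1 : n - 1 - p = n - p - 1 := by omega
    have e2 : n - 1 - (k - 1) = n - k := by omega
    have e3 : p + (k - 1) - (k - 1) = p := by omega
    rw [e0, e1] at h1
    rw [e2, e3] at h2
    have sym : (p + (k - 1)).choose p = (p + (k - 1)).choose (k - 1) := by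
      rw [← Nat.choose_symm (Nat.le_add_right p (k - 1)), e0]
    rw [← h1, ← h2, sym]
  · rw [Nat.choose_eq_zero_of_lt (by omega : n - p - 1 < k - 1),
      Nat.choose_eq_zero_of_lt (by omega : n - k < p), Nat.mul_zero, Nat.mul_zero]

lemma aux_L1 (n p k : ℕ) (hpn : p ≤ n - 1) (hpk : p + 1 ≤ k) (hkn : k ≤ n) :
    (n - 1).choose p * (n - p - 1).choose (k - p - 1) =
      (n - 1).choose (k - 1) * (k - 1).choose p := by
  have h := Nat.choose_mul (n := n - 1) (k := k - 1) (s := p) (by omega)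
  have e1 : n - 1 - p = n - p - 1 := by omega
  have e2 : k - 1 - p = k - p - 1 := by omega
  rw [e1, e2] at h
  omega

/-- For even `p` with `2 ≤ p ≤ n−1` and all `1 ≤ k ≤ n`,
`(C(n−p−1, k−p−1) − C(n−p−1, k−1))/C(n−1,k−1) = (C(k−1,p) − C(n−k,p))/C(n−1,p)`,
where a binomial coefficient with negative lower index is `0`. -/
theorem stmt_16 (n p : ℕ) (hpeven : Even p) (hp : 2 ≤ p) (hpn : p ≤ n - 1)
    (k : ℕ) (hk : 1 ≤ k) (hkn : k ≤ n) :
    (1 / ((n - 1).choose (k - 1) : ℚ)) *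
        ((if p + 1 ≤ k then ((n - p - 1).choose (k - p - 1) : ℚ) else 0) -
          ((n - p - 1).choose (k - 1) : ℚ)) =
      (1 / ((n - 1).choose p : ℚ)) *
        (((k - 1).choose p : ℚ) - ((n - k).choose p : ℚ)) := by
  have hA : ((n - 1).choose (k - 1) : ℚ) ≠ 0 := by
    exact_mod_cast (Nat.choose_pos (by omega)).ne'
  have hB : ((n - 1).choose p : ℚ) ≠ 0 := by
    exact_mod_cast (Nat.choose_pos hpn).ne'
  have h2 : ((n - 1).choose p : ℚ) * ((n - p - 1).choose (k - 1) : ℚ) =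
      ((n - 1).choose (k - 1) : ℚ) * ((n - k).choose p : ℚ) := by
    exact_mod_cast congrArg (Nat.cast : ℕ → ℚ) (aux_L2 n p k hpn hk hkn)
  have h1 : ((n - 1).choose p : ℚ) *
      (if p + 1 ≤ k then ((n - p - 1).choose (k - p - 1) : ℚ) else 0) =
      ((n - 1).choose (k - 1) : ℚ) * ((k - 1).choose p : ℚ) := by
    by_cases hpk : p + 1 ≤ k
    · simp only [if_pos hpk]
      exact_mod_cast congrArg (Nat.cast : ℕ → ℚ) (aux_L1 n p k hpn hpk hkn)
    · rw [if_neg hpk, Nat.choose_eq_zero_of_lt (by omega : k - 1 < p)]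
      simp
  field_simp
  linear_combination h1 - h2
end

section
/- For odd n and ⌈n/2⌉ < p ≤ n−1, the inequality ∑_{k=n−p+1}^{p} C(n−1, k−1)² ≥ (2p−n−1)·C(n−1, p−1)² ≥ 4·C(n−2, p−1)² holds. -/
/-!
Binomial coefficients `C(N, ·)` decrease from the middle `N / 2` outwards, so on the window
`[N - a, a]`, symmetric about `N / 2`, they are all at least `C(N, a)`; summing the squares over
the `2p - n` indices of the window gives the first inequality. For the second, Pascal's rule
`C(n-1, p-1) = C(n-2, p-2) + C(n-2, p-1)` together with `C(n-2, p-1) ≤ C(n-2, p-2)` (as `p - 2`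
lies at or past the middle of row `n - 2`) gives `2 C(n-2, p-1) ≤ C(n-1, p-1)`, and `2p - n - 1 ≥ 1`.
-/

namespace Nat

theorem choose_succ_le_choose {N k : ℕ} (h : N ≤ 2 * k + 1) : N.choose (k + 1) ≤ N.choose k := by
  have hstep := choose_succ_right_eq N k
  have hk : N - k ≤ k + 1 := by omega
  exact le_of_mul_le_mul_right (hstep ▸ Nat.mul_le_mul_left _ hk) (succ_pos k)

theorem antitoneOn_choose (N : ℕ) : AntitoneOn N.choose (Set.Ici (N / 2)) :=
  antitoneOn_nat_Ici_of_succ_le fun _ hk => choose_succ_le_choose (by omega)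

theorem choose_le_choose_of_sub_le_of_le {N a j : ℕ} (ha : a ≤ N) (hj : N - a ≤ j)
    (hja : j ≤ a) : N.choose a ≤ N.choose j := by
  have hanti := antitoneOn_choose N
  rcases le_or_gt (N / 2) j with hmid | hmid
  · exact hanti hmid (hmid.trans hja) hja
  · rw [← choose_symm (hja.trans ha)]
    exact hanti (Set.mem_Ici.2 (by omega)) (Set.mem_Ici.2 (by omega)) (by omega)

theorem two_mul_choose_succ_le_choose_succ_succ {N k : ℕ} (h : N ≤ 2 * k + 1) :
    2 * N.choose (k + 1) ≤ (N + 1).choose (k + 1) := by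
  rw [choose_succ_succ', two_mul]
  exact Nat.add_le_add_right (choose_succ_le_choose h) _

end Nat

theorem stmt_19_general (n p : ℕ) (hp : (n + 1) / 2 < p) (hpn : p ≤ n - 1) :
    (∑ k ∈ Finset.Icc (n - p + 1) p, ((n - 1).choose (k - 1)) ^ 2 ≥
        (2 * p - n - 1) * ((n - 1).choose (p - 1)) ^ 2) ∧
      (2 * p - n - 1) * ((n - 1).choose (p - 1)) ^ 2 ≥
        4 * ((n - 2).choose (p - 1)) ^ 2 := by
  constructor
  · calc (2 * p - n - 1) * ((n - 1).choose (p - 1)) ^ 2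
        ≤ (Finset.Icc (n - p + 1) p).card * ((n - 1).choose (p - 1)) ^ 2 := by
          gcongr; rw [Nat.card_Icc]; omega
      _ = ∑ _k ∈ Finset.Icc (n - p + 1) p, ((n - 1).choose (p - 1)) ^ 2 := by
          rw [Finset.sum_const, smul_eq_mul]
      _ ≤ ∑ k ∈ Finset.Icc (n - p + 1) p, ((n - 1).choose (k - 1)) ^ 2 := by
          refine Finset.sum_le_sum fun k hk => ?_
          rw [Finset.mem_Icc] at hk
          gcongr
          exact Nat.choose_le_choose_of_sub_le_of_le (by omega) (by omega) (by omega)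
  · obtain ⟨N, rfl⟩ : ∃ N, n = N + 2 := ⟨n - 2, by omega⟩
    obtain ⟨k, rfl⟩ : ∃ k, p = k + 2 := ⟨p - 2, by omega⟩
    have pascal : 2 * N.choose (k + 1) ≤ (N + 1).choose (k + 1) :=
      Nat.two_mul_choose_succ_le_choose_succ_succ (by omega)
    simp only [Nat.add_sub_cancel, show N + 2 - 1 = N + 1 by omega]
    calc 4 * N.choose (k + 1) ^ 2 = (2 * N.choose (k + 1)) ^ 2 := by ring
      _ ≤ (N + 1).choose (k + 1) ^ 2 := by gcongr
      _ ≤ (2 * (k + 2) - (N + 2) - 1) * (N + 1).choose (k + 1) ^ 2 :=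
          Nat.le_mul_of_pos_left _ (by omega)

/-- For odd `n` and `⌈n/2⌉ < p ≤ n−1`,
`∑_{k=n−p+1}^{p} C(n−1,k−1)² ≥ (2p−n−1) C(n−1,p−1)² ≥ 4 C(n−2,p−1)²`. -/
theorem stmt_19 (n p : ℕ) (hnodd : Odd n) (hp : (n + 1) / 2 < p) (hpn : p ≤ n - 1) :
    (∑ k ∈ Finset.Icc (n - p + 1) p, ((n - 1).choose (k - 1)) ^ 2 ≥
        (2 * p - n - 1) * ((n - 1).choose (p - 1)) ^ 2) ∧
      (2 * p - n - 1) * ((n - 1).choose (p - 1)) ^ 2 ≥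
        4 * ((n - 2).choose (p - 1)) ^ 2 :=
  stmt_19_general n p hp hpn
end
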